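/- For k ≥ 3 and 0 ≤ i ≤ k-2, the k-spectrum of the word w = (ab)^i a^2 b^2 (ab)^{k-i-2} equals Σ^k \ { b^{i+1} a^{k-i-1} }, and hence has cardinality 2^k − 1. -/

import Mathlib

def wa : Bool := false
def wb : Bool := true

/-- The set of scattered factors (subsequences) of `w` of length exactly `k`. -/
def ScatFact (k : ℕ) (w : List Bool) : Finset (List Bool) :=
  (w.sublists.filter (fun u => u.length = k)).toFinset

/-- `(ab)^n` : `n` repetitions of the word `ab`. -/
def abPow (n : ℕ) : List Bool := (List.replicate n ([wa, wb])).flatten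

/-!
Write a word `u` of length `i + m + 2` as `x ++ y` with `|x| = i + 1`. If `x` contains an `a`,
it embeds in `(ab)^i a` and `y` embeds in `(ab)^(m+1)`, hence in `abb(ab)^m`. Otherwise
`x = b^(i+1)` embeds in `(ab)^i aab`, and unless `u = b^(i+1) a^(m+1)` the suffix `y` contains
a `b` and embeds in `b(ab)^m`. Conversely, every cut of `w` into a prefix and a suffix lies
within `(ab)^i aa` (only `i` letters `b`) or within `bb(ab)^m` (only `m` letters `a`), so
`b^(i+1) a^(m+1)` does not embed.
-/

open List

section Alphabet

variable {α : Type*} [DecidableEq α]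

theorem not_replicate_append_replicate_sublist_append {a b : α} {p q : ℕ} {P Q : List α}
    (hP : P.count b < p) (hQ : Q.count a < q) :
    ¬ replicate p b ++ replicate q a <+ P ++ Q := by
  rw [append_sublist_iff]
  rintro ⟨r₁, r₂, hsplit, hb, ha⟩
  have hb := hb.count_le b
  have ha := ha.count_le a
  rw [count_replicate_self] at hb ha
  rcases append_eq_append_iff.1 hsplit with ⟨c, -, rfl⟩ | ⟨c, rfl, -⟩
  · exact absurd ((sublist_append_right c r₂).count_le a) (by omega)
  · exact absurd ((sublist_append_left r₁ c).count_le b) (by omega)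

theorem card_eq_pow_sub_one_of_mem_iff [Fintype α] {k : ℕ} {S : Finset (List α)}
    {e : List α} (he : e.length = k) (hS : ∀ u, u ∈ S ↔ u.length = k ∧ u ≠ e) :
    S.card = Fintype.card α ^ k - 1 := by
  let words : Finset (List α) :=
    (Finset.univ : Finset (List.Vector α k)).map
      ⟨List.Vector.toList, List.Vector.toList_injective⟩
  have mem_words (u : List α) : u ∈ words ↔ u.length = k := by
    simp only [words, Finset.mem_map, Finset.mem_univ, Function.Embedding.coeFn_mk, true_and]
    exact ⟨fun ⟨v, hv⟩ => hv ▸ v.toList_length, fun h => ⟨⟨u, h⟩, rfl⟩⟩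
  have hS_eq : S = words.erase e := by
    ext u
    rw [Finset.mem_erase, hS, mem_words, and_comm]
  rw [hS_eq, Finset.card_erase_of_mem ((mem_words e).2 he), Finset.card_map, Finset.card_univ,
    card_vector]

end Alphabet

theorem eq_replicate_not_of_not_mem {u : List Bool} {c : Bool} (h : c ∉ u) :
    u = replicate u.length (!c) :=
  eq_replicate_length.2 fun x hx => by cases x <;> cases c <;> simp_all

theorem abPow_succ (n : ℕ) : abPow (n + 1) = wa :: wb :: abPow n := rfl

theorem count_wa_abPow (n : ℕ) : (abPow n).count wa = n := by
  simp [abPow, count_flatten, wa, wb]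

theorem count_wb_abPow (n : ℕ) : (abPow n).count wb = n := by
  simp [abPow, count_flatten, wa, wb]

theorem sublist_abPow_of_length_le {u : List Bool} {n : ℕ} (h : u.length ≤ n) :
    u <+ abPow n := by
  induction u generalizing n with
  | nil => exact nil_sublist _
  | cons x t ih =>
    obtain ⟨n, rfl⟩ : ∃ n', n = n' + 1 := ⟨n - 1, by simp at h; omega⟩
    have hx : [x] <+ [wa, wb] := by cases x <;> decide
    exact hx.append (ih (by simpa using h))

theorem sublist_abPow_append_wa {u : List Bool} {n : ℕ} (hu : u.length ≤ n + 1) (ha : wa ∈ u) :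
    u <+ abPow n ++ [wa] := by
  induction n generalizing u with
  | zero =>
    obtain ⟨x, rfl⟩ := length_eq_one_iff.1 (le_antisymm hu (length_pos_of_mem ha))
    rw [mem_singleton.1 ha]
    exact Sublist.refl _
  | succ n ih =>
    rw [abPow_succ]
    match u, ha with
    | true :: t, ha =>
      exact ((ih (by simpa using hu) (by simpa [wa] using ha)).cons_cons wb).cons wa
    | false :: [], _ => exact (nil_sublist _).cons_cons wa
    | false :: true :: s, _ =>
      exact ((sublist_abPow_of_length_le (by simpa using hu)).trans
        (sublist_append_left _ _)).cons_cons wb |>.cons_cons wa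
    | false :: false :: s, _ =>
      exact ((ih (by simpa using hu) (mem_cons_self ..)).cons wb).cons_cons wa

theorem sublist_wb_cons_abPow {v : List Bool} {m : ℕ} (hv : v.length ≤ m + 1) (hb : wb ∈ v) :
    v <+ wb :: abPow m := by
  induction m generalizing v with
  | zero =>
    obtain ⟨x, rfl⟩ := length_eq_one_iff.1 (le_antisymm hv (length_pos_of_mem hb))
    rw [mem_singleton.1 hb]
    exact Sublist.refl _
  | succ m ih =>
    rw [abPow_succ]
    match v, hb with
    | true :: t, _ =>
      exact (sublist_abPow_of_length_le (n := m + 1) (by simpa using hv)).cons_cons wb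
    | false :: t, hb =>
      exact ((ih (by simpa using hv) (by simpa [wb] using hb)).cons_cons wa).cons wb

theorem sublist_abPow_aabb_abPow_of_ne {u : List Bool} {i m : ℕ} (hu : u.length = i + m + 2)
    (hne : u ≠ replicate (i + 1) wb ++ replicate (m + 1) wa) :
    u <+ abPow i ++ [wa, wa, wb, wb] ++ abPow m := by
  rw [← take_append_drop (i + 1) u] at hne ⊢
  set x := u.take (i + 1)
  set y := u.drop (i + 1)
  have hx : x.length = i + 1 := by simp [x]; omega
  have hy : y.length = m + 1 := by simp [y]; omega
  by_cases hax : wa ∈ x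
  · have hy_sub : y <+ wa :: wb :: wb :: abPow m :=
      (sublist_abPow_of_length_le hy.le).trans
        ((Sublist.refl _).cons wb |>.cons_cons wb |>.cons_cons wa)
    simpa using (sublist_abPow_append_wa hx.le hax).append hy_sub
  · have hx_eq : x = replicate i wb ++ [wb] := by
      rw [← replicate_succ', ← hx]
      exact eq_replicate_not_of_not_mem hax
    have hby : wb ∈ y := by
      by_contra hby
      apply hne
      rw [← hx, ← hy]
      exact congrArg₂ (· ++ ·) (eq_replicate_not_of_not_mem hax) (eq_replicate_not_of_not_mem hby)
    have hx_sub : x <+ abPow i ++ [wa, wa, wb] :=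
      hx_eq ▸ (sublist_abPow_of_length_le (by simp)).append (by decide)
    simpa using hx_sub.append (sublist_wb_cons_abPow hy.le hby)

theorem not_sublist_abPow_aabb_abPow (i m : ℕ) :
    ¬ replicate (i + 1) wb ++ replicate (m + 1) wa <+ abPow i ++ [wa, wa, wb, wb] ++ abPow m := by
  have := not_replicate_append_replicate_sublist_append (a := wa) (b := wb) (p := i + 1)
    (q := m + 1) (P := abPow i ++ [wa, wa]) (Q := [wb, wb] ++ abPow m)
    (by rw [count_append, count_wb_abPow]; simp [wa, wb])
    (by rw [count_append, count_wa_abPow]; simp [wa, wb])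
  simpa using this

theorem sublist_abPow_aabb_abPow_iff {u : List Bool} {i m : ℕ} (hu : u.length = i + m + 2) :
    u <+ abPow i ++ [wa, wa, wb, wb] ++ abPow m ↔
      u ≠ replicate (i + 1) wb ++ replicate (m + 1) wa :=
  ⟨fun hsub he => not_sublist_abPow_aabb_abPow i m (he ▸ hsub),
    sublist_abPow_aabb_abPow_of_ne hu⟩

theorem mem_scatFact {k : ℕ} {w u : List Bool} : u ∈ ScatFact k w ↔ u <+ w ∧ u.length = k := by
  simp [ScatFact]

theorem scatfact_two_pow_sub_one (k i : ℕ) (hk : 3 ≤ k) (hi : i ≤ k - 2) :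
    (∀ u : List Bool,
      u ∈ ScatFact k (abPow i ++ [wa, wa, wb, wb] ++ abPow (k - i - 2)) ↔
        (u.length = k ∧
          u ≠ List.replicate (i + 1) wb ++ List.replicate (k - i - 1) wa)) ∧
    (ScatFact k (abPow i ++ [wa, wa, wb, wb] ++ abPow (k - i - 2))).card
      = 2 ^ k - 1 := by
  obtain ⟨m, rfl⟩ : ∃ m, k = i + m + 2 := ⟨k - i - 2, by omega⟩
  rw [show i + m + 2 - i - 2 = m by omega, show i + m + 2 - i - 1 = m + 1 by omega]
  have hmem (u : List Bool) :
      u ∈ ScatFact (i + m + 2) (abPow i ++ [wa, wa, wb, wb] ++ abPow m) ↔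
        u.length = i + m + 2 ∧ u ≠ replicate (i + 1) wb ++ replicate (m + 1) wa := by
    rw [mem_scatFact, and_comm]
    exact and_congr_right sublist_abPow_aabb_abPow_iff
  refine ⟨hmem, ?_⟩
  simpa using card_eq_pow_sub_one_of_mem_iff (by simp; omega) hmem
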